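/- Let y ≥ 2 be an even integer and 0 ≤ x < y with gcd(x, y) = 1, and suppose x/y = [0; a_1, …, a_n] for a symmetric (palindromic) sequence (a_1, …, a_n) of positive integers with n ≥ 1. Let r_{n−1}/q_{n−1} = [0; a_1, …, a_{n−1}] in lowest terms. If n is even (so that x² ≡ −1 (mod y)), then the integer t = (x² + 1)/y satisfies t ≡ q_{n−1}·r_{n−1} (mod 2); if n is odd (so that x² ≡ 1 (mod y)), then the integer t = (x² − 1)/y satisfies t ≡ q_{n−1}·r_{n−1} (mod 2). -/

import Mathlib

/-- `cfTail a m j` is the finite continued fraction `[a_{m-j+1}; a_{m-j+2}, …, a_m]` as a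
rational number, so that `cfTail a m m = [a_1; a_2, …, a_m]` (and `cfTail a m 0 = 0`).
In particular `[0; a_1, …, a_m] = (cfTail a m m)⁻¹`. -/
def cfTail (a : ℕ → ℕ) (m : ℕ) : ℕ → ℚ
  | 0 => 0
  | j + 1 => a (m - j) + (cfTail a m j)⁻¹

/-!
Write `[a_1; …, a_k] = P_k / Q_k`. The product of the matrices `!![a_i, 1; 1, 0]`, `i ≤ n`, is
`!![P_n, P_{n-1}; Q_n, Q_{n-1}]`, so `x = Q_n`, `y = P_n`, `r_{n-1} = Q_{n-1}`, `q_{n-1} = P_{n-1}`,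
and its determinant is `P_n Q_{n-1} - P_{n-1} Q_n = (-1)^n`. For a palindrome the product is its own
transpose, so `x = Q_n = P_{n-1} = q_{n-1}`. Hence `y r_{n-1} = x² + (-1)^n`, i.e. `t = r_{n-1}`, and
`t ≡ x t` modulo 2 because `x` is coprime to the even number `y`.
-/

open Matrix

def cfMatrix (c : ℕ) : Matrix (Fin 2) (Fin 2) ℤ := !![(c : ℤ), 1; 1, 0]

def continuantMatrix (l : List ℕ) : Matrix (Fin 2) (Fin 2) ℤ := (l.map cfMatrix).prod

def cfValue : List ℕ → ℚ
  | [] => 0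
  | c :: l => c + (cfValue l)⁻¹

@[simp]
lemma det_cfMatrix (c : ℕ) : (cfMatrix c).det = -1 := by
  simp [cfMatrix, det_fin_two_of]

@[simp]
lemma transpose_cfMatrix (c : ℕ) : (cfMatrix c)ᵀ = cfMatrix c := by
  ext i j
  fin_cases i <;> fin_cases j <;> rfl

namespace continuantMatrix

@[simp]
lemma nil : continuantMatrix [] = 1 := rfl

lemma cons (c : ℕ) (l : List ℕ) :
    continuantMatrix (c :: l) = cfMatrix c * continuantMatrix l := List.prod_cons

lemma append_singleton (l : List ℕ) (c : ℕ) :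
    continuantMatrix (l ++ [c]) = continuantMatrix l * cfMatrix c := by
  simp [continuantMatrix]

lemma det_eq (l : List ℕ) : (continuantMatrix l).det = (-1) ^ l.length := by
  induction l with
  | nil => simp
  | cons c l ih => rw [cons, det_mul, det_cfMatrix, ih, List.length_cons, pow_succ', neg_one_mul]

lemma transpose_eq (l : List ℕ) : (continuantMatrix l)ᵀ = continuantMatrix l.reverse := by
  induction l with
  | nil => simp
  | cons c l ih =>
    rw [cons, transpose_mul, ih, transpose_cfMatrix, List.reverse_cons, append_singleton]

lemma zero_apply_cons (c : ℕ) (l : List ℕ) (j : Fin 2) :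
    continuantMatrix (c :: l) 0 j = c * continuantMatrix l 0 j + continuantMatrix l 1 j := by
  simp [cons, cfMatrix, mul_apply, Fin.sum_univ_two]

lemma one_apply_cons (c : ℕ) (l : List ℕ) (j : Fin 2) :
    continuantMatrix (c :: l) 1 j = continuantMatrix l 0 j := by
  simp [cons, cfMatrix, mul_apply, Fin.sum_univ_two]

lemma apply_one_append_singleton (l : List ℕ) (c : ℕ) (i : Fin 2) :
    continuantMatrix (l ++ [c]) i 1 = continuantMatrix l i 0 := by
  simp [append_singleton, cfMatrix, mul_apply, Fin.sum_univ_two]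

lemma zero_zero_pos_and_one_zero_nonneg {l : List ℕ} (hl : ∀ c ∈ l, 0 < c) :
    0 < continuantMatrix l 0 0 ∧ 0 ≤ continuantMatrix l 1 0 := by
  induction l with
  | nil => simp
  | cons c l ih =>
    obtain ⟨hp, hq⟩ := ih fun d hd => hl d (List.mem_cons_of_mem c hd)
    have hc : (1 : ℤ) ≤ c := by exact_mod_cast hl c List.mem_cons_self
    rw [zero_apply_cons, one_apply_cons]
    constructor <;> nlinarith

lemma isCoprime_first_column (l : List ℕ) :
    IsCoprime (continuantMatrix l 1 0) (continuantMatrix l 0 0) := by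
  have hdet := det_eq l
  rw [det_fin_two] at hdet
  have hsq : ((-1 : ℤ) ^ l.length) ^ 2 = 1 := by
    rw [← pow_mul, mul_comm, pow_mul, neg_one_sq, one_pow]
  exact ⟨-((-1) ^ l.length * continuantMatrix l 0 1), (-1) ^ l.length * continuantMatrix l 1 1,
    by linear_combination (-1) ^ l.length * hdet + hsq⟩

end continuantMatrix

open continuantMatrix

/-- In `ℚ`, `1 / 0 = 0`, so for `l = []` both sides vanish. -/
lemma cfValue_eq_div {l : List ℕ} (hl : ∀ c ∈ l, 0 < c) :
    cfValue l = continuantMatrix l 0 0 / continuantMatrix l 1 0 := by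
  induction l with
  | nil => simp [cfValue]
  | cons c l ih =>
    have hp : (continuantMatrix l 0 0 : ℚ) ≠ 0 := by
      exact_mod_cast (zero_zero_pos_and_one_zero_nonneg fun d hd =>
        hl d (List.mem_cons_of_mem c hd)).1.ne'
    rw [cfValue, ih fun d hd => hl d (List.mem_cons_of_mem c hd), inv_div, zero_apply_cons,
      one_apply_cons]
    push_cast
    field_simp

lemma inv_cfValue_num_den {l : List ℕ} (hl : ∀ c ∈ l, 0 < c) :
    ((cfValue l)⁻¹).num = continuantMatrix l 1 0 ∧
      ((cfValue l)⁻¹.den : ℤ) = continuantMatrix l 0 0 := by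
  have hp := (zero_zero_pos_and_one_zero_nonneg hl).1
  have hcop : Nat.Coprime (continuantMatrix l 1 0).natAbs (continuantMatrix l 0 0).natAbs :=
    Int.isCoprime_iff_gcd_eq_one.mp (isCoprime_first_column l)
  rw [cfValue_eq_div hl, inv_div]
  exact ⟨Rat.num_div_eq_of_coprime hp hcop, Rat.den_div_eq_of_coprime hp hcop⟩

theorem inv_cfValue_append_singleton_of_palindrome {l : List ℕ} {c : ℕ}
    (hpos : ∀ d ∈ l ++ [c], 0 < d) (hpal : (l ++ [c]).reverse = l ++ [c]) :
    ((cfValue (l ++ [c]))⁻¹).num = ((cfValue l)⁻¹).den ∧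
      ((cfValue (l ++ [c]))⁻¹.den : ℤ) * ((cfValue l)⁻¹).num =
        ((cfValue l)⁻¹).den ^ 2 + (-1) ^ (l.length + 1) := by
  have hl : ∀ d ∈ l, 0 < d := fun d hd => hpos d (List.mem_append_left _ hd)
  obtain ⟨hnum, hden⟩ := inv_cfValue_num_den hpos
  obtain ⟨hnum', hden'⟩ := inv_cfValue_num_den hl
  have hsymm : continuantMatrix (l ++ [c]) 0 1 = continuantMatrix (l ++ [c]) 1 0 := by
    simpa only [transpose_apply, hpal] using congrFun (congrFun (transpose_eq (l ++ [c])) 1) 0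
  have hx : continuantMatrix (l ++ [c]) 1 0 = continuantMatrix l 0 0 := by
    rw [← hsymm, apply_one_append_singleton]
  have hdet := det_eq (l ++ [c])
  rw [det_fin_two, apply_one_append_singleton, apply_one_append_singleton, hx,
    List.length_append, List.length_singleton] at hdet
  rw [hnum, hden, hnum', hden', hx]
  exact ⟨rfl, by linear_combination hdet⟩

lemma List.reverse_map_range {α : Type*} (f : ℕ → α) (m : ℕ) :
    ((List.range m).map f).reverse = (List.range m).map fun i => f (m - 1 - i) := by
  rw [← List.map_reverse, List.range_eq_range', List.reverse_range', ← List.range_eq_range',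
    List.map_map]
  simp [Function.comp_def]

def cfTerms (a : ℕ → ℕ) (m : ℕ) : List ℕ := (List.range m).map fun i => a (i + 1)

lemma cfTerms_succ (a : ℕ → ℕ) (m : ℕ) : cfTerms a (m + 1) = cfTerms a m ++ [a (m + 1)] := by
  simp [cfTerms, List.range_succ]

@[simp]
lemma length_cfTerms (a : ℕ → ℕ) (m : ℕ) : (cfTerms a m).length = m := by
  simp [cfTerms]

lemma pos_of_mem_cfTerms {a : ℕ → ℕ} {m : ℕ} (ha : ∀ i, 1 ≤ i → i ≤ m → 0 < a i) :
    ∀ c ∈ cfTerms a m, 0 < c := by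
  simp only [cfTerms, List.mem_map, List.mem_range, forall_exists_index, and_imp]
  rintro _ i hi rfl
  exact ha (i + 1) (by omega) hi

lemma reverse_cfTerms {a : ℕ → ℕ} {m : ℕ} (hsym : ∀ i, 1 ≤ i → i ≤ m → a (m + 1 - i) = a i) :
    (cfTerms a m).reverse = cfTerms a m := by
  rw [cfTerms, List.reverse_map_range]
  refine List.map_congr_left fun i hi => ?_
  have hi : i < m := List.mem_range.mp hi
  rw [← hsym (i + 1) (by omega) hi]
  congr 1
  omega

lemma cfTail_eq_cfValue (a : ℕ → ℕ) (m : ℕ) :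
    ∀ j, cfTail a m j = cfValue ((List.range j).map fun i => a (m - i)).reverse
  | 0 => rfl
  | j + 1 => by simp [cfTail, cfValue, List.range_succ, cfTail_eq_cfValue a m j]

lemma cfTail_self (a : ℕ → ℕ) (m : ℕ) : cfTail a m m = cfValue (cfTerms a m) := by
  rw [cfTail_eq_cfValue, List.reverse_map_range, cfTerms]
  congr 1
  refine List.map_congr_left fun i hi => ?_
  have hi : i < m := List.mem_range.mp hi
  congr 1
  omega

lemma Rat.num_den_natCast_div {x y : ℕ} (hy : 0 < y) (hcop : Nat.Coprime x y) :
    ((x : ℚ) / y).num = x ∧ ((x : ℚ) / y).den = y := by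
  have hy' : (0 : ℤ) < y := by exact_mod_cast hy
  have hcop' : Nat.Coprime (x : ℤ).natAbs (y : ℤ).natAbs := hcop
  simpa only [Int.cast_natCast, Nat.cast_inj] using
    And.intro (Rat.num_div_eq_of_coprime hy' hcop') (Rat.den_div_eq_of_coprime hy' hcop')

theorem stmt_16_general (y x : ℕ) (hy : Even y) (hy2 : 2 ≤ y) (hcop : Nat.Coprime x y)
    (n : ℕ) (hn : 1 ≤ n) (a : ℕ → ℕ)
    (ha : ∀ i, 1 ≤ i → i ≤ n → 0 < a i)
    (hsym : ∀ i, 1 ≤ i → i ≤ n → a (n + 1 - i) = a i)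
    (hval : (x : ℚ) / y = (cfTail a n n)⁻¹) :
    (Even n →
      Int.ModEq 2 (((x : ℤ) ^ 2 + 1) / (y : ℤ))
        ((((cfTail a (n - 1) (n - 1))⁻¹).den : ℤ) * ((cfTail a (n - 1) (n - 1))⁻¹).num)) ∧
    (Odd n →
      Int.ModEq 2 (((x : ℤ) ^ 2 - 1) / (y : ℤ))
        ((((cfTail a (n - 1) (n - 1))⁻¹).den : ℤ) * ((cfTail a (n - 1) (n - 1))⁻¹).num)) := by
  obtain ⟨m, rfl⟩ : ∃ m, n = m + 1 := ⟨n - 1, by omega⟩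
  rw [cfTail_self, cfTerms_succ] at hval
  rw [Nat.add_sub_cancel, cfTail_self]
  obtain ⟨hx, hkey⟩ := inv_cfValue_append_singleton_of_palindrome
    (cfTerms_succ a m ▸ pos_of_mem_cfTerms ha) (cfTerms_succ a m ▸ reverse_cfTerms hsym)
  obtain ⟨hnum, hden⟩ := Rat.num_den_natCast_div (by omega) hcop
  rw [← hval, hnum] at hx
  rw [← hval, hden, length_cfTerms, ← hx] at hkey
  rw [← hx]
  set r := ((cfValue (cfTerms a m))⁻¹).num
  have hxodd : (x : ℤ) ≡ 1 [ZMOD 2] :=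
    Int.odd_iff.mp (Odd.natCast ((hcop.coprime_dvd_right hy.two_dvd).odd_of_right))
  have ht : ((x : ℤ) ^ 2 + (-1) ^ (m + 1)) / y ≡ x * r [ZMOD 2] := by
    rw [← hkey, Int.mul_ediv_cancel_left _ (by omega)]
    simpa only [one_mul] using (hxodd.mul_right r).symm
  refine ⟨fun h => ?_, fun h => ?_⟩
  · rwa [h.neg_one_pow] at ht
  · rwa [h.neg_one_pow, ← sub_eq_add_neg] at ht

/-- let `y ≥ 2` be even, `0 ≤ x < y`, `gcd(x,y) = 1`, and
`x/y = [0; a_1, …, a_n]` for a symmetric sequence of positive integers with `n ≥ 1`; let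
`r_{n-1}/q_{n-1} = [0; a_1, …, a_{n-1}]` in lowest terms. If `n` is even then
`t = (x²+1)/y ≡ q_{n-1} r_{n-1} (mod 2)`; if `n` is odd then
`t = (x²-1)/y ≡ q_{n-1} r_{n-1} (mod 2)`. -/
theorem stmt_16 (y x : ℕ) (hy : Even y) (hy2 : 2 ≤ y) (hxy : x < y) (hcop : Nat.Coprime x y)
    (n : ℕ) (hn : 1 ≤ n) (a : ℕ → ℕ)
    (ha : ∀ i, 1 ≤ i → i ≤ n → 0 < a i)
    (hsym : ∀ i, 1 ≤ i → i ≤ n → a (n + 1 - i) = a i)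
    (hval : (x : ℚ) / y = (cfTail a n n)⁻¹) :
    (Even n →
      Int.ModEq 2 (((x : ℤ) ^ 2 + 1) / (y : ℤ))
        ((((cfTail a (n - 1) (n - 1))⁻¹).den : ℤ) * ((cfTail a (n - 1) (n - 1))⁻¹).num)) ∧
    (Odd n →
      Int.ModEq 2 (((x : ℤ) ^ 2 - 1) / (y : ℤ))
        ((((cfTail a (n - 1) (n - 1))⁻¹).den : ℤ) * ((cfTail a (n - 1) (n - 1))⁻¹).num)) :=
  stmt_16_general y x hy hy2 hcop n hn a ha hsym hval
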